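/- arXiv:1608.08134 — 3 statements merged into one kernel-verified Lean document; each statement's English description precedes it below -/
import Mathlib

section
/- Gurău's degree is additive under the connected-sum operation: for connected (D+1)-colored graphs G, K and edges e in G, f in K of the same color c, ω(G #_{e,f} K) = ω(G) + ω(K). -/
open scoped Classical

structure PreGraph (D : ℕ) where
  W : Type
  B : Type
  E : Type
  [finW : Finite W]
  [finB : Finite B]
  [finE : Finite E]
  src : E → W
  tgt : E → B
  col : E → Fin D

attribute [instance] PreGraph.finW PreGraph.finB PreGraph.finE

namespace PreGraph

variable {D : ℕ}

/-- A regularly edge-colored bipartite graph: at every white (resp. black) vertex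
there is exactly one incident edge of each of the `D` colors. -/
def Regular (G : PreGraph D) : Prop :=
  (∀ w c, ∃! e, G.src e = w ∧ G.col e = c) ∧
  (∀ b c, ∃! e, G.tgt e = b ∧ G.col e = c)

/-- The simple graph on all the vertices of `G` whose edges are the edges of `G`
with color in `S`. -/
def adjOn (G : PreGraph D) (S : Set (Fin D)) : SimpleGraph (G.W ⊕ G.B) where
  Adj v w := ∃ e, G.col e ∈ S ∧
    ((v = Sum.inl (G.src e) ∧ w = Sum.inr (G.tgt e)) ∨
     (w = Sum.inl (G.src e) ∧ v = Sum.inr (G.tgt e)))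
  symm := by
    constructor
    rintro v w ⟨e, hc, h⟩
    exact ⟨e, hc, h.symm⟩
  loopless := by
    constructor
    rintro v ⟨e, hc, (⟨h1, h2⟩ | ⟨h1, h2⟩)⟩ <;> rw [h1] at h2 <;> exact Sum.inl_ne_inr h2

def Connected (G : PreGraph D) : Prop := (G.adjOn Set.univ).Connected

/-- The number of faces (connected components of the `{i,j}`-bicolored subgraph). -/
noncomputable def facesCount (G : PreGraph D) (i j : Fin D) : ℕ :=
  Nat.card ((G.adjOn {i, j}).ConnectedComponent)

/-- The total number of faces of `G` (over all unordered pairs of colors). -/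
noncomputable def totalFaces (G : PreGraph D) : ℕ :=
  ∑ p ∈ Finset.univ.filter (fun p : Fin D × Fin D => p.1 < p.2), G.facesCount p.1 p.2

/-- Number of faces of the jacket associated to a cyclic permutation `σ` of the colors:
the faces of colors `σ^q(0), σ^{q+1}(0)`. -/
noncomputable def jacketFaces (G : PreGraph (D+1)) (σ : Equiv.Perm (Fin (D+1))) : ℕ :=
  ∑ q ∈ Finset.range (D+1), G.facesCount ((σ ^ q) 0) ((σ ^ (q+1)) 0)

/-- The genus of the jacket ribbon graph associated to `σ`, via Euler's formula
`2 - 2g = V - E + F`. -/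
noncomputable def jacketGenus (G : PreGraph (D+1)) (σ : Equiv.Perm (Fin (D+1))) : ℚ :=
  (2 - ((Nat.card G.W : ℚ) + (Nat.card G.B : ℚ)) + (Nat.card G.E : ℚ)
      - (G.jacketFaces σ : ℚ)) / 2

/-- Gurău's degree: the sum of the genera of the `D!/2` jackets of `G`; each jacket
corresponds to a pair `σ, σ⁻¹` of cyclic permutations of the `D+1` colors, whence the
factor `1/2`. -/
noncomputable def gurauDegree (G : PreGraph (D+1)) : ℚ :=
  (1/2) * ∑ σ ∈ Finset.univ.filter
      (fun σ : Equiv.Perm (Fin (D+1)) => σ.IsCycle ∧ σ.support = Finset.univ),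
    G.jacketGenus σ

end PreGraph

/-- The connected sum `G #_{e,f} K`: delete `e` and `f` and add two new edges
`E = (s(e), t(f))` (coded `true`) and `F = (s(f), t(e))` (coded `false`), both of the
color of `e`. -/
noncomputable def connSum {D : ℕ} (G K : PreGraph D) (e : G.E) (f : K.E) :
    PreGraph D where
  W := G.W ⊕ K.W
  B := G.B ⊕ K.B
  E := {e' : G.E // e' ≠ e} ⊕ ({f' : K.E // f' ≠ f} ⊕ Bool)
  src := fun x => match x with
    | .inl e' => .inl (G.src e'.1)
    | .inr (.inl f') => .inr (K.src f'.1)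
    | .inr (.inr true) => .inl (G.src e)
    | .inr (.inr false) => .inr (K.src f)
  tgt := fun x => match x with
    | .inl e' => .inl (G.tgt e'.1)
    | .inr (.inl f') => .inr (K.tgt f'.1)
    | .inr (.inr true) => .inr (K.tgt f)
    | .inr (.inr false) => .inl (G.tgt e)
  col := fun x => match x with
    | .inl e' => G.col e'.1
    | .inr (.inl f') => K.col f'.1
    | .inr (.inr _) => G.col e


/-!
In a regular graph every `{i,j}`-face is a cycle, so deleting an edge of color `i` or `j` keeps
its endpoints joined and does not change the number of `{i,j}`-faces. The connected sum
`G #_{e,f} K` is obtained from the disjoint union of `G - e` and `K - f` by adding two edges of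
color `c`. If `c ∈ {i,j}`, the first one joins the two pieces and the second one closes a cycle,
so `G # K` has one `{i,j}`-face less than `G` and `K` together; otherwise the faces just add up.
Along the cyclic order of colors of a jacket, `c` lies in exactly two consecutive pairs, so each
jacket of `G # K` has two faces less than the corresponding jackets of `G` and `K`, while it has
as many vertices and edges as both together. By Euler's formula its genus is the sum of theirs.
-/

theorem Nat.card_subtype_ne_add_one {α : Type*} [Finite α] (a : α) :
    Nat.card {b // b ≠ a} + 1 = Nat.card α := by
  rw [← Finite.card_option, Nat.card_congr (Equiv.optionSubtypeNe a)]

namespace SimpleGraph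

section Sum

variable {V W : Type*} {G : SimpleGraph V} {H : SimpleGraph W}

theorem reachable_sum_iff {x y : V ⊕ W} :
    (G ⊕g H).Reachable x y ↔ Sum.LiftRel G.Reachable H.Reachable x y := by
  constructor
  · rintro ⟨p⟩
    induction p with
    | nil => rename_i u; rcases u with u | u <;> constructor <;> rfl
    | @cons u _ _ hadj _ ih =>
      rcases ih with ⟨h⟩ | ⟨h⟩ <;> rcases u with u | u <;> simp only [sum_adj] at hadj
      · exact .inl (hadj.reachable.trans h)
      · exact .inr (hadj.reachable.trans h)
  · rintro (h | h)
    · exact h.map Embedding.sumInl.toHom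
    · exact h.map Embedding.sumInr.toHom

def connectedComponentSumEquiv :
    (G ⊕g H).ConnectedComponent ≃ G.ConnectedComponent ⊕ H.ConnectedComponent where
  toFun := ConnectedComponent.lift
    (Sum.elim (Sum.inl ∘ G.connectedComponentMk) (Sum.inr ∘ H.connectedComponentMk))
    fun _ _ p _ => by
      rcases reachable_sum_iff.mp ⟨p⟩ with ⟨h⟩ | ⟨h⟩ <;> simpa using ConnectedComponent.sound h
  invFun := Sum.elim (ConnectedComponent.map Embedding.sumInl.toHom)
    (ConnectedComponent.map Embedding.sumInr.toHom)
  left_inv := by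
    refine ConnectedComponent.ind ?_
    rintro (u | u) <;> rfl
  right_inv := by
    rintro (c | c) <;> induction c using ConnectedComponent.ind <;> rfl

theorem card_connectedComponent_sum [Finite V] [Finite W] :
    Nat.card (G ⊕g H).ConnectedComponent =
      Nat.card G.ConnectedComponent + Nat.card H.ConnectedComponent := by
  rw [Nat.card_congr connectedComponentSumEquiv, Nat.card_sum]

end Sum

section SupEdge

variable {V : Type*} {G : SimpleGraph V} {a b : V}

theorem Reachable.of_sup_edge {v w : V} (h : (G ⊔ edge a b).Reachable v w) :
    G.Reachable v w ∨ (G.Reachable v a ∧ G.Reachable b w) ∨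
      (G.Reachable v b ∧ G.Reachable a w) := by
  obtain ⟨p⟩ := h
  induction p with
  | nil => exact .inl .rfl
  | cons hadj _ ih =>
    rcases hadj with hadj | hadj
    · rcases ih with h | ⟨h₁, h₂⟩ | ⟨h₁, h₂⟩
      · exact .inl (hadj.reachable.trans h)
      · exact .inr (.inl ⟨hadj.reachable.trans h₁, h₂⟩)
      · exact .inr (.inr ⟨hadj.reachable.trans h₁, h₂⟩)
    · obtain ⟨⟨rfl, rfl⟩ | ⟨rfl, rfl⟩, -⟩ := (edge_adj ..).mp hadj <;>
        rcases ih with h | ⟨h₁, h₂⟩ | ⟨h₁, h₂⟩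
      · exact .inr (.inl ⟨.rfl, h⟩)
      · exact .inl (h₁.symm.trans h₂)
      · exact .inl h₂
      · exact .inr (.inr ⟨.rfl, h⟩)
      · exact .inl h₂
      · exact .inl (h₁.symm.trans h₂)

theorem card_connectedComponent_sup_edge_of_reachable [Finite V] (hab : G.Reachable a b) :
    Nat.card (G ⊔ edge a b).ConnectedComponent = Nat.card G.ConnectedComponent := by
  refine (Nat.card_eq_of_bijective _
    ⟨?_, ConnectedComponent.surjective_map_ofLE le_sup_left⟩).symm
  refine ConnectedComponent.ind₂ fun v w h => ConnectedComponent.sound ?_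
  rcases (ConnectedComponent.exact h).of_sup_edge with h | ⟨h₁, h₂⟩ | ⟨h₁, h₂⟩
  · exact h
  · exact h₁.trans (hab.trans h₂)
  · exact h₁.trans (hab.symm.trans h₂)

theorem card_connectedComponent_sup_edge_add_one [Finite V] (hab : ¬G.Reachable a b) :
    Nat.card (G ⊔ edge a b).ConnectedComponent + 1 = Nat.card G.ConnectedComponent := by
  let φ : {c : G.ConnectedComponent // c ≠ G.connectedComponentMk b} →
      (G ⊔ edge a b).ConnectedComponent := fun c => c.1.map (Hom.ofLE le_sup_left)
  have hφ : Function.Bijective φ := by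
    constructor
    · rintro ⟨c, hc⟩ ⟨c', hc'⟩ h
      induction c using ConnectedComponent.ind
      induction c' using ConnectedComponent.ind
      simp only [φ, ConnectedComponent.map_mk, Hom.coe_ofLE, id, ConnectedComponent.eq] at h
      simp only [ne_eq, ConnectedComponent.eq] at hc hc'
      rcases h.of_sup_edge with h | ⟨-, h⟩ | ⟨h, -⟩
      · exact Subtype.ext (ConnectedComponent.sound h)
      · exact absurd h.symm hc'
      · exact absurd h hc
    · refine ConnectedComponent.ind fun v => ?_
      by_cases hbv : G.Reachable b v
      · refine ⟨⟨G.connectedComponentMk a, by simpa using hab⟩, ConnectedComponent.sound ?_⟩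
        have hadj : (G ⊔ edge a b).Adj a b :=
          .inr ((edge_adj ..).mpr ⟨.inl ⟨rfl, rfl⟩, fun h => hab (h ▸ .rfl)⟩)
        exact hadj.reachable.trans (hbv.mono le_sup_left)
      · exact ⟨⟨G.connectedComponentMk v, by simpa [eq_comm] using hbv⟩, rfl⟩
  rw [← Nat.card_eq_of_bijective φ hφ, ← Finite.card_option,
    Nat.card_congr (Equiv.optionSubtypeNe _)]

end SupEdge

end SimpleGraph

namespace Equiv.Perm

open _root_.Finset

variable {α : Type*} [Fintype α] [DecidableEq α] {σ : Perm α}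

theorem IsCycleOn.card_filter_range_pow_apply_eq (hσ : σ.IsCycleOn (univ : Finset α)) (x c : α) :
    #{q ∈ range (Fintype.card α) | (σ ^ q) x = c} = 1 := by
  obtain ⟨n, hn, hnc⟩ := hσ.exists_pow_eq (mem_univ x) (mem_univ c)
  rw [card_eq_one]
  refine ⟨n, Finset.ext fun q => ?_⟩
  simp only [mem_filter, mem_range, mem_singleton, card_univ] at hn ⊢
  refine ⟨fun ⟨hq, hqc⟩ => ?_, fun h => h ▸ ⟨hn, hnc⟩⟩
  exact Nat.ModEq.eq_of_lt_of_lt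
    ((hσ.pow_apply_eq_pow_apply (mem_univ x)).mp (hqc.trans hnc.symm)) hq hn

theorem IsCycle.card_filter_range_mem_pair_pow (hσ : σ.IsCycle) (hsupp : σ.support = univ)
    (x c : α) :
    #{q ∈ range (Fintype.card α) | c ∈ ({(σ ^ q) x, (σ ^ (q + 1)) x} : Set α)} = 2 := by
  have hon := hσ.isCycleOn
  rw [← coe_support_eq_set_support, hsupp] at hon
  have hc : σ⁻¹ c ≠ c := by
    rw [Ne, inv_eq_iff_eq, eq_comm, ← Ne, ← mem_support, hsupp]
    exact mem_univ c
  have hsplit : {q ∈ range (Fintype.card α) | c ∈ ({(σ ^ q) x, (σ ^ (q + 1)) x} : Set α)} =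
      {q ∈ range (Fintype.card α) | (σ ^ q) x = c} ∪
        {q ∈ range (Fintype.card α) | (σ ^ q) x = σ⁻¹ c} := by
    ext q
    simp only [mem_filter, mem_union, Set.mem_insert_iff, Set.mem_singleton_iff, pow_succ',
      Perm.mul_apply, eq_inv_iff_eq]
    grind
  have hdisj : _root_.Disjoint {q ∈ range (Fintype.card α) | (σ ^ q) x = c}
      {q ∈ range (Fintype.card α) | (σ ^ q) x = σ⁻¹ c} :=
    disjoint_filter.mpr fun q _ h h' => hc (h'.symm.trans h)
  rw [hsplit, card_union_of_disjoint hdisj,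
    hon.card_filter_range_pow_apply_eq, hon.card_filter_range_pow_apply_eq]

end Equiv.Perm

section ColorDegree

open Finset

variable {E X C : Type*} [Fintype E] [DecidableEq X] [DecidableEq C] {f : E → X} {col : E → C}

theorem card_filter_col_mem_pair (h : ∀ x c, ∃! e, f e = x ∧ col e = c) {i j : C} (hij : i ≠ j)
    (x : X) : #{e | col e ∈ ({i, j} : Set C) ∧ f e = x} = 2 := by
  obtain ⟨a, ⟨hax, hai⟩, ha⟩ := h x i
  obtain ⟨b, ⟨hbx, hbj⟩, hb⟩ := h x j
  rw [card_eq_two]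
  refine ⟨a, b, fun hab => hij (hai ▸ hab ▸ hbj), ?_⟩
  ext e
  simp only [mem_filter, mem_univ, true_and, mem_insert, mem_singleton, Set.mem_insert_iff,
    Set.mem_singleton_iff]
  constructor
  · rintro ⟨hc | hc, hx⟩
    · exact .inl (ha e ⟨hx, hc⟩)
    · exact .inr (hb e ⟨hx, hc⟩)
  · rintro (rfl | rfl)
    · exact ⟨.inl hai, hax⟩
    · exact ⟨.inr hbj, hbx⟩

theorem card_filter_ne_col_mem_pair_add (h : ∀ x c, ∃! e, f e = x ∧ col e = c) {i j : C}
    (hij : i ≠ j) {e : E} (he : col e ∈ ({i, j} : Set C)) (x : X) :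
    #{e' | e' ≠ e ∧ col e' ∈ ({i, j} : Set C) ∧ f e' = x} + (if f e = x then 1 else 0) = 2 := by
  have herase : ({e' | e' ≠ e ∧ col e' ∈ ({i, j} : Set C) ∧ f e' = x} : Finset E) =
      ({e' | col e' ∈ ({i, j} : Set C) ∧ f e' = x} : Finset E).erase e := by
    ext; simp
  rw [← card_filter_col_mem_pair h hij x, herase]
  split_ifs with hx
  · exact card_erase_add_one (mem_filter.mpr ⟨mem_univ e, he, hx⟩)
  · rw [erase_eq_of_notMem (by simp [hx]), add_zero]

theorem card_filter_ne_col_mem_pair_mem_add (h : ∀ x c, ∃! e, f e = x ∧ col e = c) {i j : C}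
    (hij : i ≠ j) {e : E} (he : col e ∈ ({i, j} : Set C)) (s : Finset X) :
    #{e' | e' ≠ e ∧ col e' ∈ ({i, j} : Set C) ∧ f e' ∈ s} + (if f e ∈ s then 1 else 0) =
      2 * #s := by
  rw [card_eq_sum_card_fiberwise (f := f) (t := s) fun e' he' => (mem_filter.mp he').2.2.2]
  calc ∑ x ∈ s, #{e' ∈ {e' | e' ≠ e ∧ col e' ∈ ({i, j} : Set C) ∧ f e' ∈ s} | f e' = x} +
        (if f e ∈ s then 1 else 0)
      = ∑ x ∈ s, (#{e' | e' ≠ e ∧ col e' ∈ ({i, j} : Set C) ∧ f e' = x} +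
          if f e = x then 1 else 0) := by
        rw [sum_add_distrib, sum_ite_eq]
        congr 1
        refine sum_congr rfl fun x hx => congrArg card (filter_filter .. |>.trans ?_)
        ext e'
        simp only [mem_filter, mem_univ, true_and]
        grind
    _ = ∑ x ∈ s, 2 := sum_congr rfl fun x _ => card_filter_ne_col_mem_pair_add h hij he x
    _ = 2 * #s := by rw [sum_const, smul_eq_mul, mul_comm]

end ColorDegree

namespace PreGraph

open Finset SimpleGraph

section EraseEdge

variable {D : ℕ}

abbrev eraseEdge (G : PreGraph D) (e : G.E) : PreGraph D where
  W := G.W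
  B := G.B
  E := {e' // e' ≠ e}
  src e' := G.src e'
  tgt e' := G.tgt e'
  col e' := G.col e'

variable (G : PreGraph D) (e : G.E) {S : Set (Fin D)}

theorem adjOn_eraseEdge_of_notMem (hc : G.col e ∉ S) : (G.eraseEdge e).adjOn S = G.adjOn S := by
  ext v w
  constructor
  · rintro ⟨e', hc', h⟩
    exact ⟨e'.1, hc', h⟩
  · rintro ⟨e', hc', h⟩
    exact ⟨⟨e', by rintro rfl; exact hc hc'⟩, hc', h⟩

theorem adjOn_eq_eraseEdge_sup_edge (hc : G.col e ∈ S) :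
    G.adjOn S = (G.eraseEdge e).adjOn S ⊔ edge (.inl (G.src e)) (.inr (G.tgt e)) := by
  ext v w
  rw [sup_adj, edge_adj]
  constructor
  · rintro ⟨e', hc', h⟩
    by_cases he : e' = e
    · subst he
      right
      rcases h with ⟨rfl, rfl⟩ | ⟨rfl, rfl⟩ <;> simp
    · exact .inl ⟨⟨e', he⟩, hc', h⟩
  · rintro (⟨e', hc', h⟩ | ⟨h, -⟩)
    · exact ⟨e', hc', h⟩
    · exact ⟨e, hc, by tauto⟩

/- If `tgt e` were not reached, count the `{i,j}`-edges of the component of `src e` from both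
sides: its white vertices carry `2 |white| - 1` of them, its black vertices `2 |black|`. -/
theorem reachable_eraseEdge (hreg : G.Regular) {i j : Fin D} (hij : i ≠ j)
    (hc : G.col e ∈ ({i, j} : Set (Fin D))) :
    ((G.eraseEdge e).adjOn {i, j}).Reachable (.inl (G.src e)) (.inr (G.tgt e)) := by
  have := Fintype.ofFinite G.W
  have := Fintype.ofFinite G.B
  have := Fintype.ofFinite G.E
  by_contra hnr
  set R := ((G.eraseEdge e).adjOn {i, j}).Reachable (.inl (G.src e))
  have hclosed : ∀ e', e' ≠ e → G.col e' ∈ ({i, j} : Set (Fin D)) →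
      (R (.inl (G.src e')) ↔ R (.inr (G.tgt e'))) := by
    intro e' hne hc'
    have hadj : ((G.eraseEdge e).adjOn {i, j}).Adj (.inl (G.src e')) (.inr (G.tgt e')) :=
      ⟨⟨e', hne⟩, hc', .inl ⟨rfl, rfl⟩⟩
    exact ⟨fun h => h.trans hadj.reachable, fun h => h.trans hadj.symm.reachable⟩
  set AW : Finset G.W := {w | R (.inl w)}
  set AB : Finset G.B := {b | R (.inr b)}
  have hedges : ({e' | e' ≠ e ∧ G.col e' ∈ ({i, j} : Set (Fin D)) ∧ G.src e' ∈ AW} : Finset G.E) =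
      ({e' | e' ≠ e ∧ G.col e' ∈ ({i, j} : Set (Fin D)) ∧ G.tgt e' ∈ AB} : Finset G.E) := by
    ext e'
    simp only [AW, AB, mem_filter, mem_univ, true_and]
    grind
  have hW := card_filter_ne_col_mem_pair_mem_add hreg.1 hij hc AW
  have hB := card_filter_ne_col_mem_pair_mem_add hreg.2 hij hc AB
  rw [if_pos (mem_filter.mpr ⟨mem_univ _, .refl _⟩)] at hW
  rw [if_neg (show G.tgt e ∉ AB from fun h => hnr (mem_filter.mp h).2), ← hedges] at hB
  omega

end EraseEdge

section ConnSum

variable {D : ℕ} {G K : PreGraph D} {e : G.E} {f : K.E} {S : Set (Fin D)}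

variable (G K e f) in
def connSumVertexEquiv :
    (connSum G K e f).W ⊕ (connSum G K e f).B ≃ (G.W ⊕ G.B) ⊕ (K.W ⊕ K.B) :=
  Equiv.sumSumSumComm _ _ _ _

@[simp] theorem connSumVertexEquiv_inl_inl (x : G.W) :
    connSumVertexEquiv G K e f (.inl (.inl x)) = .inl (.inl x) := rfl
@[simp] theorem connSumVertexEquiv_inl_inr (x : K.W) :
    connSumVertexEquiv G K e f (.inl (.inr x)) = .inr (.inl x) := rfl
@[simp] theorem connSumVertexEquiv_inr_inl (x : G.B) :
    connSumVertexEquiv G K e f (.inr (.inl x)) = .inl (.inr x) := rfl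
@[simp] theorem connSumVertexEquiv_inr_inr (x : K.B) :
    connSumVertexEquiv G K e f (.inr (.inr x)) = .inr (.inr x) := rfl

def connSumAdjOnIso :
    (connSum G K e f).adjOn S ≃g ((G.eraseEdge e).adjOn S ⊕g (K.eraseEdge f).adjOn S) ⊔
      if G.col e ∈ S then
        edge (.inl (.inl (G.src e))) (.inr (.inr (K.tgt f))) ⊔
          edge (.inr (.inl (K.src f))) (.inl (.inr (G.tgt e)))
      else ⊥ where
  toEquiv := connSumVertexEquiv G K e f
  map_rel_iff' := by
    -- `connSum` must not be unfolded before the vertex equivalence has been evaluated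
    rintro ((v|v)|(v|v)) ((w|w)|(w|w)) <;> split_ifs with hc <;>
    simp only [connSumVertexEquiv_inl_inl, connSumVertexEquiv_inl_inr, connSumVertexEquiv_inr_inl,
      connSumVertexEquiv_inr_inr, sup_adj, sum_adj, edge_adj, bot_adj] <;>
    simp only [adjOn, connSum, Sum.exists, Bool.exists_bool, Subtype.exists, reduceCtorEq,
      Sum.inl.injEq, Sum.inr.injEq, false_and, and_false, or_false, false_or, exists_false,
      hc, true_and, ne_eq, not_false_eq_true, and_true] <;>
    tauto

theorem facesCount_connSum_add (hGreg : G.Regular) (hKreg : K.Regular) (hcol : G.col e = K.col f)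
    {i j : Fin D} (hij : i ≠ j) :
    (connSum G K e f).facesCount i j + (if G.col e ∈ ({i, j} : Set (Fin D)) then 1 else 0) =
      G.facesCount i j + K.facesCount i j := by
  unfold facesCount
  rw [Nat.card_congr (connSumAdjOnIso (S := {i, j})).connectedComponentEquiv]
  split_ifs with hc
  · have hG := G.reachable_eraseEdge e hGreg hij hc
    have hK := K.reachable_eraseEdge f hKreg hij (hcol ▸ hc)
    rw [G.adjOn_eq_eraseEdge_sup_edge e hc, K.adjOn_eq_eraseEdge_sup_edge f (hcol ▸ hc),
      card_connectedComponent_sup_edge_of_reachable hG,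
      card_connectedComponent_sup_edge_of_reachable hK, ← card_connectedComponent_sum,
      ← card_connectedComponent_sup_edge_add_one (not_reachable_sum_inl_inr _ _), ← sup_assoc,
      card_connectedComponent_sup_edge_of_reachable (hG.sum_sup_edge hK.symm).symm]
  · rw [sup_bot_eq, card_connectedComponent_sum, adjOn_eraseEdge_of_notMem G e hc,
      adjOn_eraseEdge_of_notMem K f (hcol ▸ hc), add_zero]

variable (G K e f) in
theorem card_E_connSum : Nat.card (connSum G K e f).E = Nat.card G.E + Nat.card K.E := by
  rw [← Nat.card_subtype_ne_add_one e, ← Nat.card_subtype_ne_add_one f]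
  change Nat.card ({e' // e' ≠ e} ⊕ ({f' // f' ≠ f} ⊕ Bool)) = _
  rw [Nat.card_sum, Nat.card_sum, Nat.card_eq_fintype_card (α := Bool), Fintype.card_bool]
  ring

end ConnSum

section Jacket

variable {D : ℕ} {G K : PreGraph (D + 1)} {e : G.E} {f : K.E} {σ : Equiv.Perm (Fin (D + 1))}

theorem jacketFaces_connSum_add_two (hGreg : G.Regular) (hKreg : K.Regular)
    (hcol : G.col e = K.col f) (hσ : σ.IsCycle) (hsupp : σ.support = univ) :
    (connSum G K e f).jacketFaces σ + 2 = G.jacketFaces σ + K.jacketFaces σ := by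
  have hne : ∀ q, (σ ^ q) 0 ≠ (σ ^ (q + 1)) 0 := fun q h => by
    rw [pow_succ', Equiv.Perm.mul_apply] at h
    exact Equiv.Perm.mem_support.mp (hsupp ▸ mem_univ _) h.symm
  have hpair : ∑ q ∈ range (D + 1),
      (if G.col e ∈ ({(σ ^ q) 0, (σ ^ (q + 1)) 0} : Set (Fin (D + 1))) then 1 else 0) = 2 := by
    simpa [sum_boole] using hσ.card_filter_range_mem_pair_pow hsupp 0 (G.col e)
  unfold jacketFaces
  rw [← hpair, ← sum_add_distrib, ← sum_add_distrib]
  exact sum_congr rfl fun q _ => facesCount_connSum_add hGreg hKreg hcol (hne q)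

theorem jacketGenus_connSum (hGreg : G.Regular) (hKreg : K.Regular) (hcol : G.col e = K.col f)
    (hσ : σ.IsCycle) (hsupp : σ.support = univ) :
    (connSum G K e f).jacketGenus σ = G.jacketGenus σ + K.jacketGenus σ := by
  have hF : ((connSum G K e f).jacketFaces σ : ℚ) + 2 = G.jacketFaces σ + K.jacketFaces σ := by
    exact_mod_cast jacketFaces_connSum_add_two hGreg hKreg hcol hσ hsupp
  have hW : Nat.card (connSum G K e f).W = Nat.card G.W + Nat.card K.W := Nat.card_sum
  have hB : Nat.card (connSum G K e f).B = Nat.card G.B + Nat.card K.B := Nat.card_sum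
  unfold jacketGenus
  rw [hW, hB, card_E_connSum]
  push_cast
  linarith

end Jacket

end PreGraph

theorem gurauDegree_connSum_general (D : ℕ) (G K : PreGraph (D+1))
    (hGreg : G.Regular) (hKreg : K.Regular)
    (e : G.E) (f : K.E) (hcol : G.col e = K.col f) :
    (connSum G K e f).gurauDegree = G.gurauDegree + K.gurauDegree := by
  unfold PreGraph.gurauDegree
  rw [← mul_add, ← Finset.sum_add_distrib]
  refine congrArg _ (Finset.sum_congr rfl fun σ hσ => ?_)
  obtain ⟨hcyc, hsupp⟩ := (Finset.mem_filter.mp hσ).2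
  exact PreGraph.jacketGenus_connSum hGreg hKreg hcol hcyc hsupp

/-- Gurău's degree is additive under the connected sum along two edges
of the same color: `ω(G #_{e,f} K) = ω(G) + ω(K)`. -/
theorem gurauDegree_connSum (D : ℕ) (G K : PreGraph (D+1))
    (hGreg : G.Regular) (hKreg : K.Regular)
    (hGconn : G.Connected) (hKconn : K.Connected)
    (e : G.E) (f : K.E) (hcol : G.col e = K.col f) :
    (connSum G K e f).gurauDegree = G.gurauDegree + K.gurauDegree :=
  gurauDegree_connSum_general D G K hGreg hKreg e f hcol
end

section
/- For arbitrary rank D ≥ 3, every (possibly disconnected) D-colored graph with finitely many connected components is the boundary of some connected Feynman graph of the melonic quartic model φ⁴_{D,m}; i.e., the boundary sector ∂Feyn_D(φ⁴_m) equals all of ⊔Grph_D. -/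
open scoped Classical

open scoped Classical

/-- The data of an open `(D+1)`-colored graph: bipartite vertex set, edges with a
source (white) and target (black) endpoint, colored by `0,…,D`, together with the
sets of external white/black vertices. -/
structure OpenPre (D : ℕ) where
  W : Type
  B : Type
  E : Type
  [finW : Finite W]
  [finB : Finite B]
  [finE : Finite E]
  src : E → W
  tgt : E → B
  col : E → Fin (D+1)
  extW : Set W
  extB : Set B

attribute [instance] OpenPre.finW OpenPre.finB OpenPre.finE

namespace OpenPre

variable {D : ℕ}

/-- `G` is an open `(D+1)`-colored graph: internal vertices have exactly one incident
edge of each of the `D+1` colors, external vertices have exactly one incident edge,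
which has color `0`. -/
def IsColored (G : OpenPre D) : Prop :=
  (∀ w ∉ G.extW, ∀ c, ∃! e, G.src e = w ∧ G.col e = c) ∧
  (∀ b ∉ G.extB, ∀ c, ∃! e, G.tgt e = b ∧ G.col e = c) ∧
  (∀ w ∈ G.extW, ∃! e, G.src e = w) ∧
  (∀ b ∈ G.extB, ∃! e, G.tgt e = b) ∧
  (∀ w ∈ G.extW, ∀ e, G.src e = w → G.col e = 0) ∧
  (∀ b ∈ G.extB, ∀ e, G.tgt e = b → G.col e = 0)

/-- The simple graph on the vertices of `G` with the edges of `G` of color in `S`. -/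
def adjOn (G : OpenPre D) (S : Set (Fin (D+1))) : SimpleGraph (G.W ⊕ G.B) where
  Adj v w := ∃ e, G.col e ∈ S ∧
    ((v = Sum.inl (G.src e) ∧ w = Sum.inr (G.tgt e)) ∨
     (w = Sum.inl (G.src e) ∧ v = Sum.inr (G.tgt e)))
  symm := by
    constructor
    rintro v w ⟨e, hc, h⟩
    exact ⟨e, hc, h.symm⟩
  loopless := by
    constructor
    rintro v ⟨e, hc, (⟨h1, h2⟩ | ⟨h1, h2⟩)⟩ <;> rw [h1] at h2 <;> exact Sum.inl_ne_inr h2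

def Connected (G : OpenPre D) : Prop := (G.adjOn Set.univ).Connected

/-- Boundary adjacency of color `k ∈ {1,…,D}`: the white vertex `w` and the black
vertex `b` are joined by a `(0,k)`-bicolored path in `G`. -/
def bAdj (G : OpenPre D) (k : Fin D) (w : G.W) (b : G.B) : Prop :=
  (G.adjOn {0, k.succ}).Reachable (Sum.inl w) (Sum.inr b)

end OpenPre

/-- The local "pillow" configuration: internal vertices `w, w', b, b'` span a quartic
melonic interaction vertex `V_k`: the color-`k` edge at `w` (resp. `w'`) targets `b`
(resp. `b'`), and every other non-`0`-colored edge at `w` (resp. `w'`) targets `b'`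
(resp. `b`). -/
def OpenPre.PillowAt {D : ℕ} (G : OpenPre D) (k : Fin (D+1))
    (w w' : G.W) (b b' : G.B) : Prop :=
  w ≠ w' ∧ b ≠ b' ∧
  (∀ e, G.src e = w →
    (G.col e = k → G.tgt e = b) ∧ (G.col e ≠ 0 → G.col e ≠ k → G.tgt e = b')) ∧
  (∀ e, G.src e = w' →
    (G.col e = k → G.tgt e = b') ∧ (G.col e ≠ 0 → G.col e ≠ k → G.tgt e = b))

/-- `G` is a Feynman graph of the quartic melonic model `φ⁴_{D,m}`: it is an open
`(D+1)`-colored graph, each internal vertex belongs to a pillow interaction vertex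
`V_k` (for some color `k ≠ 0`), and there is at least one internal `0`-colored
(propagator) edge. -/
def OpenPre.IsQuarticFeyn {D : ℕ} (G : OpenPre D) : Prop :=
  G.IsColored ∧
  (∀ w : G.W, w ∉ G.extW → ∃ (k : Fin (D+1)) (w' : G.W) (b b' : G.B),
    k ≠ 0 ∧ G.PillowAt k w w' b b') ∧
  (∃ e, G.col e = 0 ∧ G.src e ∉ G.extW ∧ G.tgt e ∉ G.extB)

/-- The boundary graph of the open graph `G` is isomorphic to the closed `D`-colored
graph `B`: bijections between the external legs of `G` and the vertices of `B`,
matching the `(0,k)`-bicolored paths of `G` with the `k`-colored edges of `B`. -/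
def OpenPre.BoundaryIso {D : ℕ} (G : OpenPre D) (B : PreGraph D) : Prop :=
  ∃ (fw : {x // x ∈ G.extW} ≃ B.W) (fb : {y // y ∈ G.extB} ≃ B.B),
    ∀ (w : {x // x ∈ G.extW}) (b : {y // y ∈ G.extB}) (k : Fin D),
      G.bAdj k w.1 b.1 ↔ ∃ e, B.src e = fw w ∧ B.tgt e = fb b ∧ B.col e = k


/-!
A bipartite `(D+1)`-colored graph is the same as `D + 1` bijections from its white to its
black vertices, one per color, and a regular `D`-colored graph `B` is the same as its `D`
color matchings `μ c : W ≃ B`. Replace the edge of color `c` from `x` to `μ c x` by a pillow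
`V_c`; its vertices come in an `x`-half and a `μ c x`-half, its edges of color `c` cross
between the halves and those of the other colors stay inside them. The propagators run from
the external leg `x` through the `x`-halves of its pillows in the order of the colors, then
through the `y`-halves of the pillows at `y = φ x`, and end at the external leg `y`.

A `(0,k)`-bicolored path from the leg `x` therefore runs down the chain of `x` up to the pillow
of color `k`, crosses it, and runs down the chain of `μ k x` to the leg `μ k x`; since the set
of its vertices is closed under the `(0,k)`-edges, these are all the boundary edges. Every
vertex is joined to an external black leg, and the leg `μ 0 x` to the leg `φ x`; choosing `φ`
so that these links form one cycle through all black legs makes the graph connected. For this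
one needs a second color (`D ≥ 2`), and the empty boundary graph is the boundary of a single
closed pillow.
-/

theorem SimpleGraph.Reachable.iff_of_forall_adj {V : Type*} {G : SimpleGraph V} {P : V → Prop}
    (hP : ∀ u v, G.Adj u v → (P u ↔ P v)) {u v : V} (h : G.Reachable u v) : P u ↔ P v := by
  obtain ⟨p⟩ := h
  induction p with
  | nil => rfl
  | cons ha _ ih => exact (hP _ _ ha).trans ih

open Fin.NatCast in
theorem Fin.reflTransGen_of_forall_add_one {α : Type*} {r : α → α → Prop} {n : ℕ} [NeZero n]
    {f : Fin n → α} (h : ∀ i, r (f i) (f (i + 1))) (i j : Fin n) :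
    Relation.ReflTransGen r (f i) (f j) := by
  have forward (m : ℕ) : Relation.ReflTransGen r (f i) (f (i + m)) := by
    induction m with
    | zero => simpa using .refl
    | succ m ih => exact ih.tail (by simpa [add_assoc] using h (i + m))
  simpa using forward (j - i).val

theorem Equiv.exists_forall_reflTransGen {X Y : Type*} [Finite Y] (ψ : X ≃ Y) :
    ∃ φ : X ≃ Y, ∀ y y', Relation.ReflTransGen (fun y y' => ∃ x, ψ x = y ∧ φ x = y') y y' := by
  obtain ⟨m, ⟨ε⟩⟩ := Finite.exists_equiv_fin Y
  rcases Nat.eq_zero_or_pos m with rfl | hm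
  · exact ⟨ψ, fun y => (ε y).elim0⟩
  have : NeZero m := ⟨hm.ne'⟩
  refine ⟨ψ.trans (ε.trans ((Equiv.addRight 1).trans ε.symm)), fun y y' => ?_⟩
  simpa using Fin.reflTransGen_of_forall_add_one (f := ε.symm)
    (fun i => ⟨ψ.symm (ε.symm i), by simp⟩) (ε y) (ε y')

namespace PreGraph

variable {D : ℕ} {B : PreGraph D}

noncomputable def Regular.matching (h : B.Regular) (c : Fin D) : B.W ≃ B.B where
  toFun w := B.tgt (h.1 w c).exists.choose
  invFun b := B.src (h.2 b c).exists.choose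
  left_inv w := by
    have he := (h.1 w c).exists.choose_spec
    have he' := (h.2 (B.tgt (h.1 w c).exists.choose) c).exists.choose_spec
    simp only
    rw [(h.2 _ c).unique he' ⟨rfl, he.2⟩, he.1]
  right_inv b := by
    have he := (h.2 b c).exists.choose_spec
    have he' := (h.1 (B.src (h.2 b c).exists.choose) c).exists.choose_spec
    simp only
    rw [(h.1 _ c).unique he' ⟨rfl, he.2⟩, he.1]

theorem Regular.exists_edge_iff (h : B.Regular) {w : B.W} {b : B.B} {c : Fin D} :
    (∃ e, B.src e = w ∧ B.tgt e = b ∧ B.col e = c) ↔ h.matching c w = b := by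
  have he := (h.1 w c).exists.choose_spec
  constructor
  · rintro ⟨e, hs, rfl, hc⟩
    rw [← (h.1 w c).unique he ⟨hs, hc⟩]
    rfl
  · rintro rfl
    exact ⟨_, he.1, rfl, he.2⟩

end PreGraph

namespace OpenPre

theorem adjOn_mono {D : ℕ} {G : OpenPre D} {S T : Set (Fin (D + 1))} (h : S ⊆ T) :
    G.adjOn S ≤ G.adjOn T :=
  fun _ _ ⟨e, he, h'⟩ => ⟨e, h he, h'⟩

def IsPillow {D : ℕ} {Wi Bi : Type} (π : Fin D → Wi ≃ Bi) (k : Fin D) (x x' : Wi) (y y' : Bi) :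
    Prop :=
  x ≠ x' ∧ y ≠ y' ∧ π k x = y ∧ π k x' = y' ∧ ∀ c ≠ k, π c x = y' ∧ π c x' = y

section OfPerms

variable {D : ℕ} {Wi We Bi Be : Type} [Finite Wi] [Finite We] [Finite Bi] [Finite Be]

@[simps src tgt col extW extB]
abbrev ofPerms (π₀ : Wi ⊕ We ≃ Bi ⊕ Be) (π : Fin D → Wi ≃ Bi) : OpenPre D where
  W := Wi ⊕ We
  B := Bi ⊕ Be
  E := (Wi ⊕ We) ⊕ Wi × Fin D
  src := Sum.elim id (fun p => .inl p.1)
  tgt := Sum.elim π₀ (fun p => .inl (π p.2 p.1))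
  col := Sum.elim (fun _ => 0) (fun p => p.2.succ)
  extW := Set.range .inr
  extB := Set.range .inr

variable (π₀ : Wi ⊕ We ≃ Bi ⊕ Be) (π : Fin D → Wi ≃ Bi)

theorem isColored_ofPerms : (ofPerms π₀ π).IsColored := by
  refine ⟨?_, ?_, ?_, ?_, ?_, ?_⟩
  · rintro (x | w) hx c
    · cases c using Fin.cases with
      | zero => exact ⟨.inl (.inl x), by simp, by rintro (v | ⟨x', c'⟩) <;> simp⟩
      | succ c =>
        exact ⟨.inr (x, c), by simp, by
          rintro (v | ⟨x', c'⟩) <;> simp [(Fin.succ_ne_zero _).symm]⟩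
    · exact absurd ⟨w, rfl⟩ hx
  · rintro (y | b) hy c
    · cases c using Fin.cases with
      | zero =>
        exact ⟨.inl (π₀.symm (.inl y)), by simp, by
          rintro (v | ⟨x', c'⟩) <;> simp [Equiv.eq_symm_apply]⟩
      | succ c =>
        exact ⟨.inr ((π c).symm y, c), by simp, by
          rintro (v | ⟨x', c'⟩) ⟨hv, hc⟩ <;>
            simp_all [(Fin.succ_ne_zero _).symm, Equiv.eq_symm_apply]⟩
    · exact absurd ⟨b, rfl⟩ hy
  · rintro _ ⟨w, rfl⟩
    exact ⟨.inl (.inr w), rfl, by rintro (v | ⟨x', c'⟩) <;> simp⟩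
  · rintro _ ⟨b, rfl⟩
    exact ⟨.inl (π₀.symm (.inr b)), by simp, by
      rintro (v | ⟨x', c'⟩) <;> simp [Equiv.eq_symm_apply]⟩
  · rintro _ ⟨w, rfl⟩ (v | ⟨x', c'⟩) <;> simp
  · rintro _ ⟨b, rfl⟩ (v | ⟨x', c'⟩) <;> simp

theorem adjOn_ofPerms_zero {S : Set (Fin (D + 1))} (h : 0 ∈ S) (v : Wi ⊕ We) :
    ((ofPerms π₀ π).adjOn S).Adj (.inl v) (.inr (π₀ v)) :=
  ⟨.inl v, h, .inl ⟨rfl, rfl⟩⟩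

theorem adjOn_ofPerms_succ {S : Set (Fin (D + 1))} {c : Fin D} (h : c.succ ∈ S) (x : Wi) :
    ((ofPerms π₀ π).adjOn S).Adj (.inl (.inl x)) (.inr (.inl (π c x))) :=
  ⟨.inr (x, c), h, .inl ⟨rfl, rfl⟩⟩

theorem reachable_ofPerms_iff {k : Fin D} (P : Wi ⊕ We → Prop) (Q : Bi ⊕ Be → Prop)
    (h₀ : ∀ v, P v ↔ Q (π₀ v)) (hk : ∀ x, P (.inl x) ↔ Q (.inl (π k x)))
    {u v : (Wi ⊕ We) ⊕ (Bi ⊕ Be)} (h : ((ofPerms π₀ π).adjOn {0, k.succ}).Reachable u v) :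
    Sum.elim P Q u ↔ Sum.elim P Q v := by
  have edge : ∀ e, (ofPerms π₀ π).col e ∈ ({0, k.succ} : Set (Fin (D + 1))) →
      (P ((ofPerms π₀ π).src e) ↔ Q ((ofPerms π₀ π).tgt e)) := by
    rintro (v | ⟨x, c⟩) hc
    · exact h₀ v
    · obtain rfl : c = k := by simpa [Fin.succ_ne_zero] using hc
      exact hk x
  refine h.iff_of_forall_adj ?_
  rintro _ _ ⟨e, he, ⟨rfl, rfl⟩ | ⟨rfl, rfl⟩⟩
  · exact edge e he
  · exact (edge e he).symm

theorem pillowAt_ofPerms {k : Fin D} {x x' : Wi} {y y' : Bi} (h : IsPillow π k x x' y y') :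
    (ofPerms π₀ π).PillowAt k.succ (.inl x) (.inl x') (.inl y) (.inl y') := by
  obtain ⟨hx, hy, hkx, hkx', hc⟩ := h
  refine ⟨by simpa, by simpa, ?_, ?_⟩ <;> rintro (v | ⟨z, c⟩) hs
  · simp [(Fin.succ_ne_zero _).symm]
  · obtain rfl : z = x := by simpa using hs
    rcases eq_or_ne c k with rfl | hck <;> simp_all
  · simp [(Fin.succ_ne_zero _).symm]
  · obtain rfl : z = x' := by simpa using hs
    rcases eq_or_ne c k with rfl | hck <;> simp_all

theorem isQuarticFeyn_ofPerms (hπ : ∀ x, ∃ k x' y y', IsPillow π k x x' y y')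
    (h₀ : ∃ x y, π₀ (.inl x) = .inl y) : (ofPerms π₀ π).IsQuarticFeyn := by
  refine ⟨isColored_ofPerms π₀ π, ?_, ?_⟩
  · rintro (x | w) hx
    · obtain ⟨k, x', y, y', h⟩ := hπ x
      exact ⟨k.succ, .inl x', .inl y, .inl y', Fin.succ_ne_zero k, pillowAt_ofPerms π₀ π h⟩
    · exact absurd ⟨w, rfl⟩ hx
  · obtain ⟨x, y, hxy⟩ := h₀
    exact ⟨.inl (.inl x), rfl, by simp, by simp [hxy]⟩

theorem boundaryIso_ofPerms {B : PreGraph D} (eW : We ≃ B.W) (eB : Be ≃ B.B)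
    (h : ∀ w b k, (ofPerms π₀ π).bAdj k (.inr w) (.inr b) ↔
      ∃ e, B.src e = eW w ∧ B.tgt e = eB b ∧ B.col e = k) :
    (ofPerms π₀ π).BoundaryIso B := by
  refine ⟨(Equiv.ofInjective _ Sum.inr_injective).symm.trans eW,
    (Equiv.ofInjective _ Sum.inr_injective).symm.trans eB, ?_⟩
  rintro ⟨_, w, rfl⟩ ⟨_, b, rfl⟩ k
  simpa using h w b k

end OfPerms

section PillowChain

variable {X Y : Type}

/-- The pillow of the slot `(x, c)` has the white vertices `inl (x, c)`, `inr (μ c x, c)` and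
the black vertices with the same names; its edges of color `c` cross between the two halves,
those of any other color `k` do not. -/
def crossing {D : ℕ} (μ : Fin D → X ≃ Y) (k : Fin D) : Equiv.Perm (X × Fin D ⊕ Y × Fin D) :=
  Function.Involutive.toPerm
    (Sum.elim (fun p => if p.2 = k then .inr (μ k p.1, k) else .inl p)
      (fun p => if p.2 = k then .inl ((μ k).symm p.1, k) else .inr p))
    (by rintro (⟨x, c⟩ | ⟨y, c⟩) <;> by_cases h : c = k <;> simp [h])

section Crossing

variable {D : ℕ} (μ : Fin D → X ≃ Y) (k : Fin D)

@[simp]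
theorem crossing_inl (x : X) (c : Fin D) :
    crossing μ k (.inl (x, c)) = if c = k then .inr (μ k x, k) else .inl (x, c) := rfl

@[simp]
theorem crossing_inr (y : Y) (c : Fin D) :
    crossing μ k (.inr (y, c)) = if c = k then .inl ((μ k).symm y, k) else .inr (y, c) := rfl

theorem exists_isPillow_crossing (s : X × Fin D ⊕ Y × Fin D) :
    ∃ k s' t t', IsPillow (crossing μ) k s s' t t' := by
  rcases s with ⟨x, c⟩ | ⟨y, c⟩
  · exact ⟨c, .inr (μ c x, c), .inr (μ c x, c), .inl (x, c),
      by simp +contextual [IsPillow, eq_comm]⟩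
  · exact ⟨c, .inl ((μ c).symm y, c), .inl ((μ c).symm y, c), .inr (y, c),
      by simp +contextual [IsPillow, eq_comm]⟩

end Crossing

variable {n : ℕ}

/-- The propagators: from the external leg `x` through the slots `(x, 0)`, …, `(x, n)`, then
through the slots `(φ x, 0)`, …, `(φ x, n)`, to the external leg `φ x`. -/
def chainPropagators (φ : X ≃ Y) :
    (X × Fin (n + 1) ⊕ Y × Fin (n + 1)) ⊕ X ≃ (X × Fin (n + 1) ⊕ Y × Fin (n + 1)) ⊕ Y where
  toFun
    | .inr x => .inl (.inl (x, 0))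
    | .inl (.inl (x, c)) =>
      Fin.lastCases (.inl (.inr (φ x, 0))) (fun c => .inl (.inl (x, c.succ))) c
    | .inl (.inr (y, c)) => Fin.lastCases (.inr y) (fun c => .inl (.inr (y, c.succ))) c
  invFun
    | .inr y => .inl (.inr (y, Fin.last n))
    | .inl (.inl (x, c)) => Fin.cases (.inr x) (fun c => .inl (.inl (x, c.castSucc))) c
    | .inl (.inr (y, c)) =>
      Fin.cases (.inl (.inl (φ.symm y, Fin.last n))) (fun c => .inl (.inr (y, c.castSucc))) c
  left_inv := by
    rintro ((⟨x, c⟩ | ⟨y, c⟩) | x) <;> try cases c using Fin.lastCases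
    all_goals simp
  right_inv := by
    rintro ((⟨x, c⟩ | ⟨y, c⟩) | y) <;> try cases c using Fin.cases
    all_goals simp

section ChainPropagators

variable (φ : X ≃ Y) (x : X) (y : Y) (c : Fin n)

@[simp]
theorem chainPropagators_inr : chainPropagators (n := n) φ (.inr x) = .inl (.inl (x, 0)) := rfl

@[simp]
theorem chainPropagators_inl_inl_castSucc :
    chainPropagators φ (.inl (.inl (x, c.castSucc))) = .inl (.inl (x, c.succ)) := by
  simp [chainPropagators]

@[simp]
theorem chainPropagators_inl_inl_last :
    chainPropagators φ (.inl (.inl (x, Fin.last n))) = .inl (.inr (φ x, 0)) := by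
  simp [chainPropagators]

@[simp]
theorem chainPropagators_inl_inr_castSucc :
    chainPropagators φ (.inl (.inr (y, c.castSucc))) = .inl (.inr (y, c.succ)) := by
  simp [chainPropagators]

@[simp]
theorem chainPropagators_inl_inr_last :
    chainPropagators φ (.inl (.inr (y, Fin.last n))) = .inr y := by
  simp [chainPropagators]

end ChainPropagators

variable [Finite X] [Finite Y]

abbrev pillowChain (μ : Fin (n + 1) → X ≃ Y) (φ : X ≃ Y) : OpenPre (n + 1) :=
  ofPerms (chainPropagators φ) (crossing μ)

variable (μ : Fin (n + 1) → X ≃ Y) (φ : X ≃ Y)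

theorem isQuarticFeyn_pillowChain (x : X) : (pillowChain μ φ).IsQuarticFeyn :=
  isQuarticFeyn_ofPerms _ _ (exists_isPillow_crossing μ)
    ⟨.inl (x, Fin.last n), .inr (φ x, 0), by simp⟩

theorem reachable_pillowChain_inl_slot (x : X) {k c : Fin (n + 1)} (hc : c ≤ k) :
    ((pillowChain μ φ).adjOn {0, k.succ}).Reachable (.inl (.inr x))
      (.inr (.inl (.inl (x, c)))) := by
  induction c using Fin.induction with
  | zero =>
    have along := adjOn_ofPerms_zero (chainPropagators φ) (crossing μ) (S := {0, k.succ})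
      (by simp) (.inr x)
    rw [chainPropagators_inr] at along
    exact along.reachable
  | succ c ih =>
    have hck : c.castSucc ≠ k := (Fin.castSucc_lt_succ (i := c)).trans_le hc |>.ne
    have across := adjOn_ofPerms_succ (chainPropagators φ) (crossing μ)
      (S := {0, k.succ}) (c := k) (by simp) (.inl (x, c.castSucc))
    have along := adjOn_ofPerms_zero (chainPropagators φ) (crossing μ) (S := {0, k.succ})
      (by simp) (.inl (.inl (x, c.castSucc)))
    simp only [crossing_inl, hck, if_false, chainPropagators_inl_inl_castSucc] at across along
    exact (ih ((Fin.castSucc_lt_succ (i := c)).le.trans hc)).trans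
      (across.reachable.symm.trans along.reachable)

theorem reachable_pillowChain_inr_slot (y : Y) {k c : Fin (n + 1)} (hc : k ≤ c) :
    ((pillowChain μ φ).adjOn {0, k.succ}).Reachable (.inl (.inl (.inr (y, c))))
      (.inr (.inr y)) := by
  induction c using Fin.reverseInduction with
  | last =>
    have along := adjOn_ofPerms_zero (chainPropagators φ) (crossing μ) (S := {0, k.succ})
      (by simp) (.inl (.inr (y, Fin.last n)))
    rw [chainPropagators_inl_inr_last] at along
    exact along.reachable
  | cast c ih =>
    have hck : c.succ ≠ k := (hc.trans_lt (Fin.castSucc_lt_succ (i := c))).ne'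
    have along := adjOn_ofPerms_zero (chainPropagators φ) (crossing μ) (S := {0, k.succ})
      (by simp) (.inl (.inr (y, c.castSucc)))
    have across := adjOn_ofPerms_succ (chainPropagators φ) (crossing μ)
      (S := {0, k.succ}) (c := k) (by simp) (.inr (y, c.succ))
    simp only [crossing_inr, hck, if_false, chainPropagators_inl_inr_castSucc] at across along
    exact along.reachable.trans (across.reachable.symm.trans
      (ih (hc.trans (Fin.castSucc_lt_succ (i := c)).le)))

theorem matching_eq_of_reachable_pillowChain {x : X} {y : Y} {k : Fin (n + 1)}
    (h : ((pillowChain μ φ).adjOn {0, k.succ}).Reachable (.inl (.inr x)) (.inr (.inr y))) :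
    μ k x = y := by
  -- `P` and `Q` cut out the white and the black vertices of the `(0,k)`-path from the leg `x`.
  let P : (X × Fin (n + 1) ⊕ Y × Fin (n + 1)) ⊕ X → Prop
    | .inr x' => x' = x
    | .inl (.inl (x', c)) => x' = x ∧ c < k
    | .inl (.inr (y', c)) => y' = μ k x ∧ k ≤ c
  let Q : (X × Fin (n + 1) ⊕ Y × Fin (n + 1)) ⊕ Y → Prop
    | .inr y' => y' = μ k x
    | .inl (.inl (x', c)) => x' = x ∧ c ≤ k
    | .inl (.inr (y', c)) => y' = μ k x ∧ k < c
  have h₀ : ∀ v, P v ↔ Q (chainPropagators φ v) := by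
    rintro ((⟨x', c⟩ | ⟨y', c⟩) | x') <;> try cases c using Fin.lastCases
    all_goals simp [P, Q, Fin.castSucc_lt_iff_succ_le, Fin.le_castSucc_iff, Fin.le_last]
  have hk : ∀ s, P (.inl s) ↔ Q (.inl (crossing μ k s)) := by
    rintro (⟨x', c⟩ | ⟨y', c⟩) <;> rcases eq_or_ne c k with rfl | hck
    · simp [P, Q]
    · simp [P, Q, hck, lt_iff_le_and_ne]
    · simp [P, Q, Equiv.eq_symm_apply, eq_comm]
    · simp [P, Q, hck, hck.symm, lt_iff_le_and_ne]
  simpa [P, Q, eq_comm] using reachable_ofPerms_iff _ _ P Q h₀ hk h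

theorem bAdj_pillowChain_iff {x : X} {y : Y} {k : Fin (n + 1)} :
    (pillowChain μ φ).bAdj k (.inr x) (.inr y) ↔ μ k x = y := by
  refine ⟨matching_eq_of_reachable_pillowChain μ φ, ?_⟩
  rintro rfl
  have across := adjOn_ofPerms_succ (chainPropagators φ) (crossing μ) (S := {0, k.succ})
    (c := k) (by simp) (.inr (μ k x, k))
  simp only [crossing_inr, if_true, Equiv.symm_apply_apply] at across
  exact (reachable_pillowChain_inl_slot μ φ x le_rfl).trans
    (across.reachable.symm.trans (reachable_pillowChain_inr_slot μ φ _ le_rfl))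

theorem reachable_pillowChain_inr_matching (x : X) (k : Fin (n + 1)) :
    ((pillowChain μ φ).adjOn Set.univ).Reachable (.inl (.inr x)) (.inr (.inr (μ k x))) :=
  ((bAdj_pillowChain_iff μ φ).2 rfl).mono (adjOn_mono (Set.subset_univ _))

variable [Nontrivial (Fin (n + 1))]

theorem adj_pillowChain_slot (s : X × Fin (n + 1) ⊕ Y × Fin (n + 1)) :
    ((pillowChain μ φ).adjOn Set.univ).Adj (.inl (.inl s)) (.inr (.inl s)) := by
  rcases s with ⟨x, c⟩ | ⟨y, c⟩ <;> obtain ⟨k, hk⟩ := exists_ne c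
  · simpa [hk.symm] using adjOn_ofPerms_succ (chainPropagators φ) (crossing μ) (c := k)
      (Set.mem_univ _) (.inl (x, c))
  · simpa [hk.symm] using adjOn_ofPerms_succ (chainPropagators φ) (crossing μ) (c := k)
      (Set.mem_univ _) (.inr (y, c))

theorem exists_reachable_pillowChain_inr (v : (pillowChain μ φ).W ⊕ (pillowChain μ φ).B) :
    ∃ y, ((pillowChain μ φ).adjOn Set.univ).Reachable v (.inr (.inr y)) := by
  have hmono {k : Fin (n + 1)} := adjOn_mono (G := pillowChain μ φ) (Set.subset_univ {0, k.succ})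
  have from_inl (x : X) (c : Fin (n + 1)) : ((pillowChain μ φ).adjOn Set.univ).Reachable
      (.inr (.inl (.inl (x, c)))) (.inr (.inr (μ 0 x))) :=
    ((reachable_pillowChain_inl_slot μ φ x le_rfl).mono hmono).symm.trans
      (reachable_pillowChain_inr_matching μ φ x 0)
  have from_inr (y : Y) (c : Fin (n + 1)) : ((pillowChain μ φ).adjOn Set.univ).Reachable
      (.inl (.inl (.inr (y, c)))) (.inr (.inr y)) :=
    (reachable_pillowChain_inr_slot μ φ y (Fin.zero_le c)).mono hmono
  rcases v with ((⟨x, c⟩ | ⟨y, c⟩) | x) | ((⟨x, c⟩ | ⟨y, c⟩) | y)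
  · exact ⟨_, (adj_pillowChain_slot μ φ _).reachable.trans (from_inl x c)⟩
  · exact ⟨y, from_inr y c⟩
  · exact ⟨_, reachable_pillowChain_inr_matching μ φ x 0⟩
  · exact ⟨_, from_inl x c⟩
  · exact ⟨y, (adj_pillowChain_slot μ φ _).reachable.symm.trans (from_inr y c)⟩
  · exact ⟨y, .rfl⟩

theorem reachable_pillowChain_matching_zero_inr (x : X) :
    ((pillowChain μ φ).adjOn Set.univ).Reachable (.inr (.inr (μ 0 x))) (.inr (.inr (φ x))) := by
  have hmono {k : Fin (n + 1)} := adjOn_mono (G := pillowChain μ φ) (Set.subset_univ {0, k.succ})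
  have along := adjOn_ofPerms_zero (chainPropagators φ) (crossing μ) (Set.mem_univ 0)
    (.inl (.inl (x, Fin.last n)))
  rw [chainPropagators_inl_inl_last] at along
  exact (reachable_pillowChain_inr_matching μ φ x 0).symm
    |>.trans ((reachable_pillowChain_inl_slot μ φ x le_rfl).mono hmono)
    |>.trans (adj_pillowChain_slot μ φ _).reachable.symm
    |>.trans along.reachable
    |>.trans (adj_pillowChain_slot μ φ _).reachable.symm
    |>.trans ((reachable_pillowChain_inr_slot μ φ (φ x) le_rfl).mono hmono)

theorem connected_pillowChain [Nonempty Y]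
    (hφ : ∀ y y', Relation.ReflTransGen (fun y y' => ∃ x, μ 0 x = y ∧ φ x = y') y y') :
    (pillowChain μ φ).Connected := by
  have inr_reachable {y y'}
      (h : Relation.ReflTransGen (fun y y' => ∃ x, μ 0 x = y ∧ φ x = y') y y') :
      ((pillowChain μ φ).adjOn Set.univ).Reachable (.inr (.inr y)) (.inr (.inr y')) := by
    induction h with
    | refl => rfl
    | tail _ hstep ih =>
      obtain ⟨x, rfl, rfl⟩ := hstep
      exact ih.trans (reachable_pillowChain_matching_zero_inr μ φ x)
  have : Nonempty ((pillowChain μ φ).W ⊕ (pillowChain μ φ).B) :=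
    ⟨.inr (.inr (Classical.arbitrary Y))⟩
  refine ⟨fun u v => ?_⟩
  obtain ⟨y, hu⟩ := exists_reachable_pillowChain_inr μ φ u
  obtain ⟨y', hv⟩ := exists_reachable_pillowChain_inr μ φ v
  exact hu.trans ((inr_reachable (hφ y y')).trans hv.symm)

end PillowChain

section VacuumPillow

variable (n : ℕ)

abbrev vacuumPillow : OpenPre (n + 1) :=
  ofPerms (Equiv.refl (Bool ⊕ Empty)) fun c => if c = 0 then Equiv.refl Bool else Equiv.boolNot

theorem isQuarticFeyn_vacuumPillow : (vacuumPillow n).IsQuarticFeyn :=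
  isQuarticFeyn_ofPerms _ _ (fun s => ⟨0, !s, s, !s, by simp +contextual [IsPillow]⟩)
    ⟨true, true, rfl⟩

theorem connected_vacuumPillow [Nontrivial (Fin (n + 1))] : (vacuumPillow n).Connected := by
  have along (s : Bool) : ((vacuumPillow n).adjOn Set.univ).Adj (.inl (.inl s)) (.inr (.inl s)) :=
    adjOn_ofPerms_zero _ _ (Set.mem_univ 0) (.inl s)
  have across (s : Bool) :
      ((vacuumPillow n).adjOn Set.univ).Adj (.inl (.inl s)) (.inr (.inl !s)) := by
    obtain ⟨c, hc⟩ := exists_ne (0 : Fin (n + 1))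
    simpa [hc] using adjOn_ofPerms_succ (Equiv.refl (Bool ⊕ Empty))
      (fun c => if c = 0 then Equiv.refl Bool else Equiv.boolNot) (c := c) (Set.mem_univ _) s
  have to_true (v : (vacuumPillow n).W ⊕ (vacuumPillow n).B) :
      ((vacuumPillow n).adjOn Set.univ).Reachable v (.inr (.inl true)) := by
    rcases v with ((_ | _) | e) | ((_ | _) | e)
    · exact (across false).reachable
    · exact (along true).reachable
    · exact e.elim
    · exact (along false).reachable.symm.trans (across false).reachable
    · rfl
    · exact e.elim
  have : Nonempty ((vacuumPillow n).W ⊕ (vacuumPillow n).B) := ⟨.inr (.inl true)⟩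
  exact ⟨fun u v => (to_true u).trans (to_true v).symm⟩

theorem boundaryIso_vacuumPillow {B : PreGraph (n + 1)} [IsEmpty B.W] [IsEmpty B.B] :
    (vacuumPillow n).BoundaryIso B :=
  boundaryIso_ofPerms _ _ (Equiv.equivOfIsEmpty _ _) (Equiv.equivOfIsEmpty _ _) fun w => w.elim

end VacuumPillow

end OpenPre

theorem PreGraph.Regular.boundaryIso_pillowChain {n : ℕ} {B : PreGraph (n + 1)} (h : B.Regular)
    (φ : B.W ≃ B.B) : (OpenPre.pillowChain h.matching φ).BoundaryIso B :=
  OpenPre.boundaryIso_ofPerms _ _ (Equiv.refl _) (Equiv.refl _) fun _ _ _ =>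
    (OpenPre.bAdj_pillowChain_iff _ _).trans h.exists_edge_iff.symm

/-- For arbitrary rank `D ≥ 3`, every (possibly disconnected)
`D`-colored graph is the boundary of some connected Feynman graph of the quartic
melonic model `φ⁴_{D,m}`: the boundary sector is all of `⨿ Grph_D`. -/
theorem boundary_surjective_quartic_melonic (D : ℕ) (hD : 3 ≤ D)
    (B : PreGraph D) (hreg : B.Regular) :
    ∃ G : OpenPre D, G.IsQuarticFeyn ∧ G.Connected ∧ G.BoundaryIso B := by
  obtain ⟨n, rfl⟩ : ∃ n, D = n + 1 := ⟨D - 1, by omega⟩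
  have : Nontrivial (Fin (n + 1)) := Fin.nontrivial_iff_two_le.2 (by omega)
  rcases isEmpty_or_nonempty B.W with _ | ⟨⟨x⟩⟩
  · have : IsEmpty B.B := (hreg.matching 0).symm.isEmpty
    exact ⟨OpenPre.vacuumPillow n, OpenPre.isQuarticFeyn_vacuumPillow n,
      OpenPre.connected_vacuumPillow n, OpenPre.boundaryIso_vacuumPillow n⟩
  · have : Nonempty B.B := ⟨hreg.matching 0 x⟩
    obtain ⟨φ, hφ⟩ := (hreg.matching 0).exists_forall_reflTransGen
    exact ⟨OpenPre.pillowChain hreg.matching φ, OpenPre.isQuarticFeyn_pillowChain _ φ x,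
      OpenPre.connected_pillowChain _ φ hφ, hreg.boundaryIso_pillowChain φ⟩
end

section
/- For connected D-colored graphs R and Q with white vertices labelled by momenta that are colorwise pairwise distinct, the multiple source-derivative of the monomial J(R) with respect to J(Q), evaluated at J = J̄ = 0, equals the sum over automorphisms σ of R of the product of Kronecker deltas matching the σ-permuted momenta of R to those of Q when R ≅ Q, and vanishes identically when R ≇ Q. -/
/-!
The monomial `𝕁(R)` has exponent `Jexp R`, so the coefficient in question is `1` or `0`
according as the exponents of `R` and `Q` agree. Equal exponents mean equal multisets of white
and of black momenta; matching them gives bijections of the white and of the black vertices.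
The `i`-th coordinate of a black momentum is the `i`-th coordinate of the momentum at the end of
the `i`-coloured edge, so colorwise distinctness forces the induced bijection of edges (at a black
vertex, by colour) to preserve incidence: it is an isomorphism. Conversely, relabelling along an
isomorphism does not change the exponent. In a connected regular graph an automorphism is
determined by its action on white vertices, which an injective labelling pins down, so at most one
automorphism matches two labellings.
-/

open scoped Classical

/-- An automorphism of a colored graph: permutations of white vertices, black vertices
and edges preserving the bipartition, the edge colors and the incidence relations. -/
structure PreGraph.Aut {D : ℕ} (G : PreGraph D) where
  w : Equiv.Perm G.W
  b : Equiv.Perm G.B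
  e : Equiv.Perm G.E
  hsrc : ∀ x, G.src (e x) = w (G.src x)
  htgt : ∀ x, G.tgt (e x) = b (G.tgt x)
  hcol : ∀ x, G.col (e x) = G.col x

/-- An isomorphism of colored graphs. -/
structure PreGraph.Iso {D : ℕ} (G H : PreGraph D) where
  w : G.W ≃ H.W
  b : G.B ≃ H.B
  e : G.E ≃ H.E
  hsrc : ∀ x, H.src (e x) = w (G.src x)
  htgt : ∀ x, H.tgt (e x) = b (G.tgt x)
  hcol : ∀ x, H.col (e x) = G.col x

/-- The momentum carried by a black vertex `b` of a regular `D`-colored graph whose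
white vertices carry the momenta `x`: its `i`-th component is the `i`-th component of
the momentum at the white vertex joined to `b` by the (unique) `i`-colored edge. -/
noncomputable def blackMom {D : ℕ} (G : PreGraph D) (hreg : G.Regular)
    (x : G.W → Fin D → ℤ) (b : G.B) : Fin D → ℤ :=
  fun i => x (G.src (hreg.2 b i).exists.choose) i

/-- The source monomial `𝕁(G)(x) = ∏_w J_{x(w)} · ∏_b J̄_{p(b)}` attached to a labelled
`D`-colored graph, as a polynomial in the commuting variables `J_v` (`Sum.inl v`) and
`J̄_v` (`Sum.inr v`), `v ∈ ℤ^D`. -/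
noncomputable def Jmon {D : ℕ} (G : PreGraph D) (hreg : G.Regular)
    (x : G.W → Fin D → ℤ) : MvPolynomial ((Fin D → ℤ) ⊕ (Fin D → ℤ)) ℚ :=
  (∏ᶠ w : G.W, MvPolynomial.X (Sum.inl (x w))) *
    ∏ᶠ b : G.B, MvPolynomial.X (Sum.inr (blackMom G hreg x b))

/-- The exponent (multidegree) of the source monomial `𝕁(G)(x)`. -/
noncomputable def Jexp {D : ℕ} (G : PreGraph D) (hreg : G.Regular)
    (x : G.W → Fin D → ℤ) : ((Fin D → ℤ) ⊕ (Fin D → ℤ)) →₀ ℕ :=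
  (∑ᶠ w : G.W, Finsupp.single (Sum.inl (x w)) 1) +
    ∑ᶠ b : G.B, Finsupp.single (Sum.inr (blackMom G hreg x b)) 1

open Function

theorem exists_equiv_comp_eq_of_card_fiber_eq {α β γ : Type*} [Finite α] [Finite β]
    {f : α → γ} {g : β → γ} (h : ∀ c, Nat.card {a // f a = c} = Nat.card {b // g b = c}) :
    ∃ e : α ≃ β, ∀ a, g (e a) = f a :=
  ⟨Equiv.ofFiberEquiv fun c => (Finite.card_eq.1 (h c)).some, Equiv.ofFiberEquiv_map _⟩

theorem Finsupp.finsum_single_one_apply {ι α : Type*} [Finite ι] (f : ι → α) (a : α) :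
    (∑ᶠ i, Finsupp.single (f i) 1 : α →₀ ℕ) a = Nat.card {i // f i = a} := by
  have := Fintype.ofFinite ι
  rw [finsum_eq_sum_of_fintype, Finsupp.finsetSum_apply, Nat.card_eq_fintype_card,
    Fintype.card_subtype]
  simp [Finsupp.single_apply]

namespace PreGraph

variable {D : ℕ} {G H : PreGraph D}

theorem Connected.subsingleton_of_zero {G : PreGraph 0} (hG : G.Connected) :
    Subsingleton (G.W ⊕ G.B) := by
  have hbot : G.adjOn Set.univ = ⊥ := by
    ext v w
    simp only [adjOn, SimpleGraph.bot_adj, iff_false, not_exists]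
    exact fun e => (G.col e).elim0
  exact (SimpleGraph.connected_bot_iff.1 (hbot ▸ hG)).1

theorem Connected.injective_of_colorwise (hG : G.Connected) {x : G.W → Fin D → ℤ}
    (hx : ∀ w w', w ≠ w' → ∀ i, x w i ≠ x w' i) : Injective x := by
  cases D with
  | zero =>
    -- without colours, connectedness alone leaves a single vertex
    have := hG.subsingleton_of_zero
    have := (Sum.inl_injective (α := G.W) (β := G.B)).subsingleton
    exact injective_of_subsingleton x
  | succ n => exact fun w w' h => by_contra fun hne => hx w w' hne 0 (congrFun h 0)

namespace Regular

variable (hG : G.Regular)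

noncomputable def edgeAt (b : G.B) (i : Fin D) : G.E := (hG.2 b i).exists.choose

theorem tgt_edgeAt (b : G.B) (i : Fin D) : G.tgt (hG.edgeAt b i) = b :=
  (hG.2 b i).exists.choose_spec.1

theorem col_edgeAt (b : G.B) (i : Fin D) : G.col (hG.edgeAt b i) = i :=
  (hG.2 b i).exists.choose_spec.2

theorem eq_edgeAt {e : G.E} {b : G.B} {i : Fin D} (hb : G.tgt e = b) (hi : G.col e = i) :
    e = hG.edgeAt b i :=
  (hG.2 b i).unique ⟨hb, hi⟩ (hG.2 b i).exists.choose_spec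

noncomputable def tgtColEquiv : G.E ≃ G.B × Fin D where
  toFun e := (G.tgt e, G.col e)
  invFun p := hG.edgeAt p.1 p.2
  left_inv _ := (hG.eq_edgeAt rfl rfl).symm
  right_inv p := Prod.ext (hG.tgt_edgeAt p.1 p.2) (hG.col_edgeAt p.1 p.2)

end Regular

theorem blackMom_apply (hG : G.Regular) (x : G.W → Fin D → ℤ) (b : G.B) (i : Fin D) :
    blackMom G hG x b i = x (G.src (hG.edgeAt b i)) i :=
  rfl

theorem Jexp_apply_inl (hG : G.Regular) (x : G.W → Fin D → ℤ) (v : Fin D → ℤ) :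
    Jexp G hG x (Sum.inl v) = Nat.card {w // x w = v} := by
  simp [Jexp, Finsupp.finsum_single_one_apply]

theorem Jexp_apply_inr (hG : G.Regular) (x : G.W → Fin D → ℤ) (v : Fin D → ℤ) :
    Jexp G hG x (Sum.inr v) = Nat.card {b // blackMom G hG x b = v} := by
  simp [Jexp, Finsupp.finsum_single_one_apply]

theorem Jmon_eq_monomial (hG : G.Regular) (x : G.W → Fin D → ℤ) :
    Jmon G hG x = MvPolynomial.monomial (Jexp G hG x) 1 := by
  have := Fintype.ofFinite G.W
  have := Fintype.ofFinite G.B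
  simp only [Jmon, Jexp, finprod_eq_prod_of_fintype, finsum_eq_sum_of_fintype,
    MvPolynomial.X, ← MvPolynomial.monomial_sum_one, MvPolynomial.monomial_mul, one_mul]

theorem blackMom_comp_iso (hG : G.Regular) (hH : H.Regular) (I : G.Iso H)
    (y : H.W → Fin D → ℤ) (b : G.B) :
    blackMom G hG (fun w => y (I.w w)) b = blackMom H hH y (I.b b) := by
  funext i
  have hedge : I.e (hG.edgeAt b i) = hH.edgeAt (I.b b) i :=
    hH.eq_edgeAt (by rw [I.htgt, hG.tgt_edgeAt]) (by rw [I.hcol, hG.col_edgeAt])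
  rw [blackMom_apply, blackMom_apply, ← hedge, I.hsrc]

theorem Jexp_comp_iso (hG : G.Regular) (hH : H.Regular) (I : G.Iso H)
    (y : H.W → Fin D → ℤ) : Jexp G hG (fun w => y (I.w w)) = Jexp H hH y := by
  simp only [Jexp, blackMom_comp_iso hG hH I]
  rw [finsum_comp_equiv I.w (f := fun w => Finsupp.single (Sum.inl (y w)) 1),
    finsum_comp_equiv I.b (f := fun b => Finsupp.single (Sum.inr (blackMom H hH y b)) 1)]

theorem Jexp_eq_iff_exists_iso (hG : G.Regular) (hH : H.Regular)
    {x : G.W → Fin D → ℤ} {y : H.W → Fin D → ℤ}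
    (hx : ∀ w w', w ≠ w' → ∀ i, x w i ≠ x w' i) :
    Jexp G hG x = Jexp H hH y ↔ ∃ I : G.Iso H, ∀ w, y (I.w w) = x w := by
  refine ⟨fun h => ?_, fun ⟨I, hI⟩ => ?_⟩
  · have hW (v) : Nat.card {w // x w = v} = Nat.card {w // y w = v} := by
      rw [← Jexp_apply_inl hG, ← Jexp_apply_inl hH, h]
    have hB (v) : Nat.card {b // blackMom G hG x b = v} =
        Nat.card {b // blackMom H hH y b = v} := by
      rw [← Jexp_apply_inr hG, ← Jexp_apply_inr hH, h]
    obtain ⟨φ, hφ⟩ := exists_equiv_comp_eq_of_card_fiber_eq hW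
    obtain ⟨ψ, hψ⟩ := exists_equiv_comp_eq_of_card_fiber_eq hB
    let f : G.E ≃ H.E :=
      hG.tgtColEquiv.trans ((ψ.prodCongr (Equiv.refl _)).trans hH.tgtColEquiv.symm)
    have hy : ∀ w w', w ≠ w' → ∀ i, y w i ≠ y w' i := by
      intro w w' hne i
      rw [← φ.apply_symm_apply w, ← φ.apply_symm_apply w', hφ, hφ]
      exact hx _ _ (φ.symm.injective.ne hne) i
    -- the black momenta match, so colorwise distinctness pins down the white end of each edge
    have hsrc (e : G.E) : H.src (f e) = φ (G.src e) := by
      have hmom : y (H.src (f e)) (G.col e) = y (φ (G.src e)) (G.col e) :=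
        calc y (H.src (f e)) (G.col e) = blackMom H hH y (ψ (G.tgt e)) (G.col e) := rfl
          _ = x (G.src e) (G.col e) := by
            rw [hψ, blackMom_apply, ← hG.eq_edgeAt rfl rfl]
          _ = y (φ (G.src e)) (G.col e) := by rw [hφ]
      by_contra hne
      exact hy _ _ hne _ hmom
    exact ⟨⟨φ, ψ, f, hsrc, fun _ => hH.tgt_edgeAt _ _, fun _ => hH.col_edgeAt _ _⟩, hφ⟩
  · rw [← Jexp_comp_iso hG hH I y]
    exact congrArg _ (funext fun w => (hI w).symm)

def Aut.equivIso (G : PreGraph D) : G.Aut ≃ G.Iso G where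
  toFun Θ := ⟨Θ.w, Θ.b, Θ.e, Θ.hsrc, Θ.htgt, Θ.hcol⟩
  invFun I := ⟨I.w, I.b, I.e, I.hsrc, I.htgt, I.hcol⟩
  left_inv _ := rfl
  right_inv _ := rfl

theorem Aut.ext_of_w (hG : G.Regular) (hGc : G.Connected) {Θ Θ' : G.Aut}
    (hw : Θ.w = Θ'.w) : Θ = Θ' := by
  have he : Θ.e = Θ'.e := Equiv.ext fun e =>
    (hG.1 (Θ.w (G.src e)) (G.col e)).unique ⟨Θ.hsrc e, Θ.hcol e⟩
      ⟨by rw [Θ'.hsrc, hw], Θ'.hcol e⟩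
  have hb : Θ.b = Θ'.b := Equiv.ext fun b => by
    cases D with
    | zero =>
      have := hGc.subsingleton_of_zero
      exact Sum.inr_injective (α := G.W) (Subsingleton.elim _ _)
    | succ n => rw [← hG.tgt_edgeAt b 0, ← Θ.htgt, ← Θ'.htgt, he]
  cases Θ; cases Θ'
  dsimp only at hw hb he
  subst hw hb he
  rfl

theorem card_aut_comp_eq (hG : G.Regular) (hGc : G.Connected) {x y : G.W → Fin D → ℤ}
    (hx : ∀ w w', w ≠ w' → ∀ i, x w i ≠ x w' i)
    (hy : ∀ w w', w ≠ w' → ∀ i, y w i ≠ y w' i) :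
    Nat.card {Θ : G.Aut // ∀ w, x (Θ.w w) = y w} =
      if Jexp G hG x = Jexp G hG y then 1 else 0 := by
  have : Subsingleton {Θ : G.Aut // ∀ w, x (Θ.w w) = y w} :=
    ⟨fun Θ Θ' => Subtype.ext <| Aut.ext_of_w hG hGc <| Equiv.ext fun w =>
      hGc.injective_of_colorwise hx ((Θ.2 w).trans (Θ'.2 w).symm)⟩
  split_ifs with h
  · obtain ⟨I, hI⟩ := (Jexp_eq_iff_exists_iso hG hG hy).1 h.symm
    have : Nonempty {Θ : G.Aut // ∀ w, x (Θ.w w) = y w} :=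
      ⟨⟨(Aut.equivIso G).symm I, hI⟩⟩
    exact Nat.card_unique
  · have : IsEmpty {Θ : G.Aut // ∀ w, x (Θ.w w) = y w} :=
      ⟨fun Θ => h ((Jexp_eq_iff_exists_iso hG hG hy).2 ⟨Aut.equivIso G Θ.1, Θ.2⟩).symm⟩
    exact Nat.card_of_isEmpty

end PreGraph

/-- The multiple source-derivative at `J = J̄ = 0` is the coefficient of the (multilinear)
monomial `𝕁(Q)` in `𝕁(R)`. -/
theorem graph_calculus_general (D : ℕ) (R Q : PreGraph D)
    (hR : R.Regular) (hQ : Q.Regular) (hRc : R.Connected)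
    (c : R.W → Fin D → ℤ) (a : Q.W → Fin D → ℤ)
    (hc : ∀ w w', w ≠ w' → ∀ i, c w i ≠ c w' i) :
    (IsEmpty (R.Iso Q) → MvPolynomial.coeff (Jexp Q hQ a) (Jmon R hR c) = 0) ∧
    (∀ a₂ : R.W → Fin D → ℤ, (∀ w w', w ≠ w' → ∀ i, a₂ w i ≠ a₂ w' i) →
      MvPolynomial.coeff (Jexp R hR a₂) (Jmon R hR c) =
        (Nat.card {Θ : R.Aut // ∀ w, c (Θ.w w) = a₂ w} : ℚ)) := by
  refine ⟨fun hiso => ?_, fun a₂ ha₂ => ?_⟩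
  · rw [PreGraph.Jmon_eq_monomial, MvPolynomial.coeff_monomial,
      if_neg fun h => hiso.false ((PreGraph.Jexp_eq_iff_exists_iso hR hQ hc).1 h).choose]
  · rw [PreGraph.Jmon_eq_monomial, MvPolynomial.coeff_monomial,
      PreGraph.card_aut_comp_eq hR hRc hc ha₂]
    norm_cast

/-- Graph calculus: for connected regular `D`-colored graphs `R`, `Q`
with colorwise pairwise distinct white momenta, the multiple source-derivative of the
monomial `𝕁(R)` with respect to `𝕁(Q)` at `J = J̄ = 0` — i.e. the coefficient of the
(multilinear) monomial of `Q` in the monomial of `R` — vanishes when `R ≇ Q`, and for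
`R = Q` it equals the number of automorphisms of `R` matching the two labelings
(the sum over `Aut_c(R)` of the products of Kronecker deltas). -/
theorem graph_calculus (D : ℕ) (R Q : PreGraph D)
    (hR : R.Regular) (hQ : Q.Regular) (hRc : R.Connected) (hQc : Q.Connected)
    (c : R.W → Fin D → ℤ) (a : Q.W → Fin D → ℤ)
    (hc : ∀ w w', w ≠ w' → ∀ i, c w i ≠ c w' i)
    (ha : ∀ w w', w ≠ w' → ∀ i, a w i ≠ a w' i) :
    (IsEmpty (R.Iso Q) → MvPolynomial.coeff (Jexp Q hQ a) (Jmon R hR c) = 0) ∧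
    (∀ a₂ : R.W → Fin D → ℤ, (∀ w w', w ≠ w' → ∀ i, a₂ w i ≠ a₂ w' i) →
      MvPolynomial.coeff (Jexp R hR a₂) (Jmon R hR c) =
        (Nat.card {Θ : R.Aut // ∀ w, c (Θ.w w) = a₂ w} : ℚ)) :=
  graph_calculus_general D R Q hR hQ hRc c a hc
end
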